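/- arXiv:1803.06084 — 3 statements merged into one kernel-verified Lean document; each statement's English description precedes it below -/
import Mathlib

section
/- If l : ℝ → ℝ is twice differentiable with α ≤ l''(x) ≤ β for all x, then for any real random variable X with finite variance, (α/2)·Var(X) ≤ E[l(X)] − l(E[X]) ≤ (β/2)·Var(X). -/
open MeasureTheory

lemma key_nonneg (h h' h'' : ℝ → ℝ) (m : ℝ)
    (hd : ∀ x, HasDerivAt h (h' x) x) (hd' : ∀ x, HasDerivAt h' (h'' x) x)
    (h2 : ∀ x, 0 ≤ h'' x) (hm' : h' m = 0) (hm : h m = 0) : ∀ x, 0 ≤ h x := by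
  have hmono : Monotone h' := monotone_of_hasDerivAt_nonneg hd' h2
  intro x
  rcases le_total m x with hx | hx
  · -- h monotone on Ici m
    have : MonotoneOn h (Set.Ici m) := by
      apply monotoneOn_of_deriv_nonneg (convex_Ici m)
        (fun y _ => ((hd y).continuousAt).continuousWithinAt)
        (fun y _ => ((hd y).differentiableAt).differentiableWithinAt)
      intro y hy
      rw [(hd y).deriv]
      rw [interior_Ici] at hy
      calc (0:ℝ) = h' m := hm'.symm
        _ ≤ h' y := hmono (le_of_lt hy)
    calc (0:ℝ) = h m := hm.symm
      _ ≤ h x := this Set.self_mem_Ici hx hx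
  · have : AntitoneOn h (Set.Iic m) := by
      apply antitoneOn_of_deriv_nonpos (convex_Iic m)
        (fun y _ => ((hd y).continuousAt).continuousWithinAt)
        (fun y _ => ((hd y).differentiableAt).differentiableWithinAt)
      intro y hy
      rw [(hd y).deriv]
      rw [interior_Iic] at hy
      calc h' y ≤ h' m := hmono (le_of_lt hy)
        _ = 0 := hm'
    calc (0:ℝ) = h m := hm.symm
      _ ≤ h x := this hx Set.self_mem_Iic hx

/-- If `α ≤ l'' ≤ β` everywhere, then for any random variable `X` with finite
variance, `(α/2)·Var X ≤ E[l X] − l (E X) ≤ (β/2)·Var X`. -/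
theorem stmt_1 {Ω : Type*} [MeasurableSpace Ω] (μ : Measure Ω)
    [IsProbabilityMeasure μ]
    (l l' l'' : ℝ → ℝ) (α β : ℝ)
    (hl' : ∀ x, HasDerivAt l (l' x) x)
    (hl'' : ∀ x, HasDerivAt l' (l'' x) x)
    (hαβ : ∀ x, α ≤ l'' x ∧ l'' x ≤ β)
    (X : Ω → ℝ) (hX : MemLp X 2 μ)
    (hlX : Integrable (fun ω => l (X ω)) μ) :
    α / 2 * ProbabilityTheory.variance X μ ≤ (∫ ω, l (X ω) ∂μ) - l (∫ ω, X ω ∂μ) ∧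
      (∫ ω, l (X ω) ∂μ) - l (∫ ω, X ω ∂μ) ≤ β / 2 * ProbabilityTheory.variance X μ := by
  set m := ∫ ω, X ω ∂μ with hmdef
  have hX1 : Integrable X μ := hX.integrable one_le_two
  have hsq : Integrable (fun ω => (X ω - m) ^ 2) μ :=
    (hX.sub (memLp_const m)).integrable_sq
  have hXm : Integrable (fun ω => X ω - m) μ := hX1.sub (integrable_const m)
  have hXm0 : ∫ ω, (X ω - m) ∂μ = 0 := by
    rw [integral_sub hX1 (integrable_const m)]
    simp [hmdef]
  have hvar : ProbabilityTheory.variance X μ = ∫ ω, (X ω - m) ^ 2 ∂μ := by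
    rw [ProbabilityTheory.variance_eq_integral hX.aestronglyMeasurable.aemeasurable]
  -- lower bound: g(x) = l x - l m - l' m * (x - m) - α/2 * (x-m)^2 ≥ 0
  have hlow : ∀ x, 0 ≤ l x - l m - l' m * (x - m) - α / 2 * (x - m) ^ 2 := by
    apply key_nonneg _ (fun x => l' x - l' m - α * (x - m)) (fun x => l'' x - α) m
    · intro x
      have := ((hl' x).sub_const (l m)).sub
        (((hasDerivAt_id x).sub_const m).const_mul (l' m))
      have h2 := (((hasDerivAt_id x).sub_const m).pow 2).const_mul (α / 2)
      convert this.sub h2 using 1 <;> first | ring1 | (simp only [id_eq]; ring1) | rfl | (funext y; simp only [id_eq, Pi.sub_apply, Pi.add_apply, Pi.pow_apply] <;> ring1)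
    · intro x
      have := ((hl'' x).sub_const (l' m)).sub (((hasDerivAt_id x).sub_const m).const_mul α)
      convert this using 1 <;> first | ring1 | (simp only [id_eq]; ring1) | rfl | (funext y; simp only [id_eq, Pi.sub_apply, Pi.add_apply, Pi.pow_apply] <;> ring1)
    · intro x; linarith [(hαβ x).1]
    · simp
    · simp
  have hhigh : ∀ x, 0 ≤ l m + l' m * (x - m) + β / 2 * (x - m) ^ 2 - l x := by
    apply key_nonneg _ (fun x => l' m + β * (x - m) - l' x) (fun x => β - l'' x) m
    · intro x
      have h1 := (((hasDerivAt_id x).sub_const m).const_mul (l' m))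
      have h2 := (((hasDerivAt_id x).sub_const m).pow 2).const_mul (β / 2)
      convert ((h1.const_add (l m)).add h2).sub (hl' x) using 1 <;> first | ring1 | (simp only [id_eq]; ring1) | rfl | (funext y; simp only [id_eq, Pi.sub_apply, Pi.add_apply, Pi.pow_apply] <;> ring1)
    · intro x
      have := ((((hasDerivAt_id x).sub_const m).const_mul β).const_add (l' m)).sub (hl'' x)
      convert this using 1 <;> first | ring1 | (simp only [id_eq]; ring1) | rfl | (funext y; simp only [id_eq, Pi.sub_apply, Pi.add_apply, Pi.pow_apply] <;> ring1)
    · intro x; linarith [(hαβ x).2]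
    · simp
    · simp
  have hint : Integrable (fun ω => l' m * (X ω - m)) μ := hXm.const_mul _
  have hint2 : Integrable (fun ω => α / 2 * (X ω - m) ^ 2) μ := hsq.const_mul _
  have hint3 : Integrable (fun ω => β / 2 * (X ω - m) ^ 2) μ := hsq.const_mul _
  constructor
  · have := integral_nonneg (μ := μ)
      (f := fun ω => l (X ω) - l m - l' m * (X ω - m) - α / 2 * (X ω - m) ^ 2)
      (fun ω => hlow (X ω))
    have heq : ∫ ω, (l (X ω) - l m - l' m * (X ω - m) - α / 2 * (X ω - m) ^ 2) ∂μ
        = (∫ ω, l (X ω) ∂μ) - l m - l' m * (∫ ω, (X ω - m) ∂μ)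
          - α / 2 * ∫ ω, (X ω - m) ^ 2 ∂μ := by
      rw [integral_sub (f := fun ω => l (X ω) - l m - l' m * (X ω - m))
          (g := fun ω => α / 2 * (X ω - m) ^ 2)
          (((hlX.sub (integrable_const (l m))).sub hint)) hint2,
        integral_sub (f := fun ω => l (X ω) - l m) (g := fun ω => l' m * (X ω - m))
          (hlX.sub (integrable_const (l m))) hint,
        integral_sub (f := fun ω => l (X ω)) (g := fun _ => l m) hlX (integrable_const (l m)),
        integral_const_mul, integral_const_mul]
      simp
    rw [heq, hXm0] at this
    rw [hvar]
    linarith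
  · have := integral_nonneg (μ := μ)
      (f := fun ω => l m + l' m * (X ω - m) + β / 2 * (X ω - m) ^ 2 - l (X ω))
      (fun ω => hhigh (X ω))
    have heq : ∫ ω, (l m + l' m * (X ω - m) + β / 2 * (X ω - m) ^ 2 - l (X ω)) ∂μ
        = l m + l' m * (∫ ω, (X ω - m) ∂μ) + β / 2 * (∫ ω, (X ω - m) ^ 2 ∂μ)
          - ∫ ω, l (X ω) ∂μ := by
      rw [integral_sub (f := fun ω => l m + l' m * (X ω - m) + β / 2 * (X ω - m) ^ 2)
          (g := fun ω => l (X ω)) (((integrable_const (l m)).add hint).add hint3) hlX,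
        integral_add (f := fun ω => l m + l' m * (X ω - m))
          (g := fun ω => β / 2 * (X ω - m) ^ 2) ((integrable_const (l m)).add hint) hint3,
        integral_add (f := fun _ => l m) (g := fun ω => l' m * (X ω - m))
          (integrable_const (l m)) hint,
        integral_const_mul, integral_const_mul]
      simp
    rw [heq, hXm0] at this
    rw [hvar]
    linarith
end

section
/- Let A₁,…,Aₘ be row-stochastic matrices on a finite state space Ω, βᵢ > 0, β = Σβᵢ, A = Σ βᵢAᵢ, ρ a probability vector, and R = (β+1)⁻¹(A + 𝟏ρᵀ). Then R is row-stochastic, and π = ρᵀ(I(β+1) − A)⁻¹ satisfies πR = π; i.e., π is a stationary distribution of the Markov chain with transition matrix R. -/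
open Matrix

/-- The combined augmentation/retraction transition matrix
`R = (β+1)⁻¹(A + 𝟏ρᵀ)` is row-stochastic, and `π = ρᵀ(I(β+1) − A)⁻¹` is a
stationary distribution for it. -/
theorem stmt_5 {Ω : Type*} [Fintype Ω] [DecidableEq Ω] {m : ℕ}
    (A₀ : Fin m → Matrix Ω Ω ℝ)
    (hA0 : ∀ i u v, 0 ≤ A₀ i u v)
    (hA1 : ∀ i u, ∑ v, A₀ i u v = 1)
    (βs : Fin m → ℝ) (hβ : ∀ i, 0 < βs i)
    (ρ : Ω → ℝ) (hρ0 : ∀ u, 0 ≤ ρ u) (hρ1 : ∑ u, ρ u = 1)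
    (β : ℝ) (hβdef : β = ∑ i, βs i)
    (A : Matrix Ω Ω ℝ) (hAdef : A = ∑ i, βs i • A₀ i)
    (R : Matrix Ω Ω ℝ)
    (hRdef : R = (β + 1)⁻¹ • (A + Matrix.of fun _ v => ρ v))
    (π : Ω → ℝ)
    (hπdef : π = Matrix.vecMul ρ ((β + 1) • (1 : Matrix Ω Ω ℝ) - A)⁻¹) :
    (∀ u v, 0 ≤ R u v) ∧ (∀ u, ∑ v, R u v = 1) ∧ Matrix.vecMul π R = π := by
  have hAnn : ∀ u v, 0 ≤ A u v := by
    intro u v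
    rw [hAdef]
    simp only [Finset.sum_apply, Matrix.sum_apply, Matrix.smul_apply, smul_eq_mul]
    exact Finset.sum_nonneg fun i _ => mul_nonneg (hβ i).le (hA0 i u v)
  have hArow : ∀ u, ∑ v, A u v = β := by
    intro u
    rw [hAdef, hβdef]
    simp only [Matrix.sum_apply, Matrix.smul_apply, smul_eq_mul]
    rw [Finset.sum_comm]
    refine Finset.sum_congr rfl fun i _ => ?_
    rw [← Finset.mul_sum, hA1 i u, mul_one]
  have hβnn : 0 ≤ β := by
    rw [hβdef]; exact Finset.sum_nonneg fun i _ => (hβ i).le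
  have hβ1 : (0:ℝ) < β + 1 := by linarith
  set M : Matrix Ω Ω ℝ := (β + 1) • (1 : Matrix Ω Ω ℝ) - A with hM
  have hMentry : ∀ u v, M u v = (if u = v then β + 1 else 0) - A u v := by
    intro u v
    simp [hM, Matrix.one_apply]
  have hdet : M.det ≠ 0 := by
    apply det_ne_zero_of_sum_row_lt_diag
    intro k
    have h1 : ∑ j ∈ Finset.univ.erase k, ‖M k j‖ = β - A k k := by
      have : ∀ j ∈ Finset.univ.erase k, ‖M k j‖ = A k j := by
        intro j hj
        rw [Finset.mem_erase] at hj
        rw [hMentry, if_neg (fun h => hj.1 h.symm), zero_sub, norm_neg,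
          Real.norm_eq_abs, abs_of_nonneg (hAnn k j)]
      rw [Finset.sum_congr rfl this]
      have := hArow k
      rw [← Finset.add_sum_erase _ _ (Finset.mem_univ k)] at this
      linarith
    have hAkk : A k k ≤ β := by
      have := hArow k
      rw [← Finset.add_sum_erase _ _ (Finset.mem_univ k)] at this
      have : ∑ j ∈ Finset.univ.erase k, A k j ≥ 0 :=
        Finset.sum_nonneg fun j _ => hAnn k j
      linarith
    have h2 : ‖M k k‖ = β + 1 - A k k := by
      rw [hMentry, if_pos rfl, Real.norm_eq_abs, abs_of_nonneg]
      linarith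
    rw [h1, h2]; linarith
  have hπM : Matrix.vecMul π M = ρ := by
    rw [hπdef, Matrix.vecMul_vecMul, Matrix.nonsing_inv_mul M (isUnit_iff_ne_zero.mpr hdet),
      Matrix.vecMul_one]
  have hMrow : ∀ u, ∑ v, M u v = 1 := by
    intro u
    simp only [hMentry]
    rw [Finset.sum_sub_distrib, hArow, Finset.sum_ite_eq Finset.univ u (fun _ => β + 1)]
    simp
  have hπsum : ∑ u, π u = 1 := by
    have h := congrArg (fun w => ∑ v, w v) hπM
    simp only [Matrix.vecMul, dotProduct] at h
    rw [Finset.sum_comm] at h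
    simp_rw [← Finset.mul_sum, hMrow, mul_one] at h
    rw [h, hρ1]
  have hπA : ∀ v, ∑ u, π u * A u v = (β + 1) * π v - ρ v := by
    intro v
    have h := congrFun hπM v
    simp only [Matrix.vecMul, dotProduct, hMentry, mul_sub, mul_ite, mul_zero,
      Finset.sum_sub_distrib, Finset.sum_ite_eq' Finset.univ v, Finset.mem_univ,
      if_true] at h
    linarith
  refine ⟨?_, ?_, ?_⟩
  · intro u v
    rw [hRdef]
    simp only [Matrix.smul_apply, Matrix.add_apply, Matrix.of_apply, smul_eq_mul]
    exact mul_nonneg (inv_nonneg.2 hβ1.le) (add_nonneg (hAnn u v) (hρ0 v))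
  · intro u
    rw [hRdef]
    simp only [Matrix.smul_apply, Matrix.add_apply, Matrix.of_apply, smul_eq_mul]
    rw [← Finset.mul_sum, Finset.sum_add_distrib, hArow, hρ1]
    field_simp
  · funext v
    rw [hRdef]
    simp only [Matrix.vecMul, dotProduct, Matrix.smul_apply, Matrix.add_apply,
      Matrix.of_apply, smul_eq_mul]
    have h1 : ∑ u, π u * ((β + 1)⁻¹ * (A u v + ρ v))
        = (β + 1)⁻¹ * ∑ u, (π u * A u v + π u * ρ v) := by
      rw [Finset.mul_sum]; exact Finset.sum_congr rfl fun u _ => by ring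
    rw [h1, Finset.sum_add_distrib, hπA v, ← Finset.sum_mul, hπsum, one_mul]
    field_simp
    ring
end

section
/- Let A be a square matrix with A𝟏 = β𝟏 and ρ a vector with ρᵀ𝟏 = 1, and let R = (A + 𝟏ρᵀ)/(β+1). Define πₙ = (ρᵀ/(β+1))·(Aⁿ/(β+1)^{n−1} + Σ_{i=0}^{n−1}(A/(β+1))ⁱ) for n ≥ 1 and π₀ = ρᵀ. Then π_{n+1} = πₙR for all n ≥ 0; i.e., πₙ is the distribution of the Markov chain at time n started from ρ. -/
open Matrix

/-- The finite-time distributions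
`πₙ = (ρᵀ/(β+1))·(Aⁿ/(β+1)^{n−1} + Σ_{i<n}(A/(β+1))ⁱ)` (with `π₀ = ρ`)
satisfy the Markov chain recurrence `π_{n+1} = πₙ R`. -/
theorem stmt_9 {Ω : Type*} [Fintype Ω] [DecidableEq Ω]
    (A : Matrix Ω Ω ℝ) (β : ℝ) (hβ : 0 ≤ β)
    (hA1 : A.mulVec (fun _ => 1) = fun _ => β)
    (ρ : Ω → ℝ) (hρ1 : ∑ u, ρ u = 1)
    (R : Matrix Ω Ω ℝ)
    (hRdef : R = (β + 1)⁻¹ • (A + Matrix.of fun _ v => ρ v))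
    (πn : ℕ → Ω → ℝ) (hπ0 : πn 0 = ρ)
    (hπn : ∀ n : ℕ, 1 ≤ n → πn n =
      (β + 1)⁻¹ • Matrix.vecMul ρ
        ((((β + 1 : ℝ) ^ ((n : ℤ) - 1))⁻¹) • A ^ n +
          ∑ i ∈ Finset.range n, ((β + 1)⁻¹) ^ i • A ^ i)) :
    ∀ n : ℕ, πn (n + 1) = Matrix.vecMul (πn n) R := by
  have hc : (β + 1 : ℝ) ≠ 0 := by positivity
  set c : ℝ := (β + 1)⁻¹ with hcdef
  have hc1 : c * (β + 1) = 1 := inv_mul_cancel₀ hc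
  -- vecMul of a scalar-scaled matrix
  have hvsmul : ∀ (x : Ω → ℝ) (t : ℝ) (M : Matrix Ω Ω ℝ),
      x ᵥ* (t • M) = t • (x ᵥ* M) := by
    intro x t M
    funext v
    simp [vecMul, dotProduct, Finset.mul_sum, mul_left_comm]
  -- vecMul against the rank-one matrix 𝟏ρᵀ
  have hP : ∀ x : Ω → ℝ, x ᵥ* (Matrix.of fun _ v => ρ v) = (∑ u, x u) • ρ := by
    intro x
    funext v
    simp [vecMul, dotProduct, Finset.sum_mul]
  -- row sums of A^k
  have hrow : ∀ k : ℕ, (A ^ k) *ᵥ (fun _ => (1 : ℝ)) = fun _ => β ^ k := by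
    intro k
    induction k with
    | zero => simp [Matrix.one_mulVec]
    | succ k ih =>
      have hβ1 : (fun _ : Ω => β) = β • (fun _ : Ω => (1 : ℝ)) := by
        funext u; simp
      rw [pow_succ, ← Matrix.mulVec_mulVec, hA1, hβ1, Matrix.mulVec_smul, ih]
      funext u
      simp [pow_succ, mul_comm]
  have hsum : ∀ k : ℕ, ∑ v, (ρ ᵥ* (A ^ k)) v = β ^ k := by
    intro k
    have hrowk : ∀ u, ∑ v, (A ^ k) u v = β ^ k := by
      intro u
      have := congrFun (hrow k) u
      simpa [mulVec, dotProduct] using this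
    calc ∑ v, (ρ ᵥ* (A ^ k)) v = ∑ v, ∑ u, ρ u * (A ^ k) u v := by
          simp [vecMul, dotProduct]
      _ = ∑ u, ρ u * ∑ v, (A ^ k) u v := by
          rw [Finset.sum_comm]; simp [Finset.mul_sum]
      _ = β ^ k := by simp [hrowk, ← Finset.sum_mul, hρ1]
  -- key scalar identity
  have hkey : ∀ m : ℕ, c ^ m * β ^ m + c * ∑ i ∈ Finset.range m, c ^ i * β ^ i = 1 := by
    intro m
    induction m with
    | zero => simp
    | succ m ih =>
      rw [Finset.sum_range_succ]
      rw [hcdef] at *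
      linear_combination ih + β ^ m * ((β + 1)⁻¹) ^ m * hc1
  intro n
  match n with
  | 0 =>
    have h1 : πn 1 = c • (ρ ᵥ* (A + 1)) := by
      rw [hπn 1 le_rfl]
      norm_num
    rw [h1, hπ0, hRdef, hvsmul, Matrix.vecMul_add, Matrix.vecMul_add, hP,
      Matrix.vecMul_one, hρ1, one_smul]
  | (m + 1) =>
    set M : Matrix Ω Ω ℝ := c ^ m • A ^ (m + 1) + ∑ i ∈ Finset.range (m + 1), c ^ i • A ^ i
      with hM
    -- zpow normalization
    have hz1 : (((β + 1 : ℝ) ^ (((m + 1 : ℕ) : ℤ) - 1))⁻¹) = c ^ m := by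
      have : (((m + 1 : ℕ) : ℤ) - 1) = (m : ℤ) := by push_cast; ring
      rw [this, zpow_natCast, hcdef, inv_pow]
    have hz2 : (((β + 1 : ℝ) ^ (((m + 2 : ℕ) : ℤ) - 1))⁻¹) = c ^ (m + 1) := by
      have : (((m + 2 : ℕ) : ℤ) - 1) = ((m + 1 : ℕ) : ℤ) := by push_cast; ring
      rw [this, zpow_natCast, hcdef, inv_pow]
    have hπm1 : πn (m + 1) = c • (ρ ᵥ* M) := by
      rw [hπn (m + 1) (by omega)]
      rw [hz1, hM]
    have hπm2 : πn (m + 2) = c • (ρ ᵥ* (c ^ (m + 1) • A ^ (m + 2) +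
        ∑ i ∈ Finset.range (m + 2), c ^ i • A ^ i)) := by
      rw [hπn (m + 2) (by omega)]
      rw [hz2]
    -- the matrix identity
    have hmat : c ^ (m + 1) • A ^ (m + 2) + ∑ i ∈ Finset.range (m + 2), c ^ i • A ^ i
        = c • (M * A) + 1 := by
      rw [Finset.sum_range_succ', hM]
      simp only [pow_zero, one_smul, pow_succ, add_mul, Finset.sum_mul, smul_mul_assoc,
        smul_add, Finset.smul_sum, smul_smul]
      rw [add_assoc]
      congr 2
      · ring_nf
      · apply Finset.sum_congr rfl
        intro i _
        congr 1
        ring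
    -- total mass of πn (m+1) paired with the rank-one part
    have hmass : c * ∑ u, (ρ ᵥ* M) u = 1 := by
      have : ∑ u, (ρ ᵥ* M) u
          = c ^ m * β ^ (m + 1) + ∑ i ∈ Finset.range (m + 1), c ^ i * β ^ i := by
        rw [hM, Matrix.vecMul_add]
        have h2 : ρ ᵥ* (∑ i ∈ Finset.range (m + 1), c ^ i • A ^ i)
            = ∑ i ∈ Finset.range (m + 1), c ^ i • (ρ ᵥ* A ^ i) := by
          induction (Finset.range (m + 1)) using Finset.induction with
          | empty => funext v; simp [vecMul, dotProduct]
          | insert _ _ h ih =>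
            rw [Finset.sum_insert h, Finset.sum_insert h, Matrix.vecMul_add, hvsmul, ih]
        rw [hvsmul, h2]
        simp only [Pi.add_apply, Finset.sum_add_distrib, Pi.smul_apply, smul_eq_mul,
          Finset.sum_apply]
        rw [← Finset.mul_sum, hsum]
        congr 1
        rw [Finset.sum_comm]
        apply Finset.sum_congr rfl
        intro i _
        rw [← Finset.mul_sum, hsum]
      rw [this, mul_add, Finset.mul_sum]
      have := hkey (m + 1)
      rw [Finset.sum_range_succ] at this
      calc c * (c ^ m * β ^ (m + 1)) + ∑ i ∈ Finset.range (m + 1), c * (c ^ i * β ^ i)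
          = c ^ (m + 1) * β ^ (m + 1) +
            c * (∑ i ∈ Finset.range m, c ^ i * β ^ i + c ^ m * β ^ m) := by
            rw [mul_add, Finset.sum_range_succ, Finset.mul_sum]; ring
        _ = 1 := by rw [← Finset.sum_range_succ]; exact hkey (m + 1)
    -- put everything together
    rw [hπm2, hmat, hπm1, hRdef, Matrix.smul_vecMul, hvsmul, Matrix.vecMul_add,
      Matrix.vecMul_add, hvsmul, Matrix.vecMul_one, hP, Matrix.vecMul_vecMul]
    funext v
    simp only [Pi.smul_apply, Pi.add_apply, smul_eq_mul]
    linear_combination (-(c * ρ v)) * hmass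
end
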